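/- Let p : [0,T] × ℝⁿ → ℝ be C^{1,2} with p(t,x) > 0 everywhere, satisfying the Fokker–Planck equation ∂ₜp(t,x) = (1/2)β(t)²[x·∇p(t,x) + n·p(t,x) + Δp(t,x)]. Define u(t,x) = log p(T-t, x) - (n/2)∫₀^{T-t} β(s)² ds + log c for a constant c > 0. Then u satisfies the semi-linear PDE ∂ₜu(t,x) + β̄(t)²[(1/2)x + ∇u(t,x)]·∇u(t,x) + (1/2)β̄(t)²Δu(t,x) - (1/2)‖β̄(t)∇u(t,x)‖² = 0, where β̄(t) = β(T-t), with terminal condition u(T,x) = log(c·p(0,x)). -/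

import Mathlib

open Set intervalIntegral
open scoped RealInnerProductSpace

/-- Spatial Laplacian: sum of second partial derivatives along the coordinate axes. -/
noncomputable def lap {n : ℕ} (f : EuclideanSpace ℝ (Fin n) → ℝ)
    (x : EuclideanSpace ℝ (Fin n)) : ℝ :=
  ∑ i : Fin n, fderiv ℝ (fun y => fderiv ℝ f y (EuclideanSpace.single i 1)) x
    (EuclideanSpace.single i 1)

/-! Since `u(t, ·) = log p(T - t, ·) + const`, the chain rule gives `∂ₜu = -∂ₜp / p + (n/2) β̄²`,
`∇u = ∇p / p` and `Δu = Δp / p - ‖∇p‖² / p²`. Substituting the Fokker–Planck equation for `∂ₜp`,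
the `n`-term cancels against the derivative of the integral, the `x·∇p / p` and `Δp / p` terms
cancel, and so do the three quadratic terms `β̄²‖∇u‖² - ½β̄²‖∇u‖² - ½‖β̄∇u‖²`. -/

section SpatialDerivatives

variable {n : ℕ}

lemma gradient_add_const {F : Type*} [NormedAddCommGroup F] [InnerProductSpace ℝ F]
    [CompleteSpace F] (f : F → ℝ) (C : ℝ) (x : F) :
    gradient (fun y => f y + C) x = gradient f x := by
  rw [gradient, fderiv_add_const, gradient]

lemma gradient_log {F : Type*} [NormedAddCommGroup F] [InnerProductSpace ℝ F]
    [CompleteSpace F] {f : F → ℝ} {x : F} (hf : DifferentiableAt ℝ f x) (hx : f x ≠ 0) :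
    gradient (fun y => Real.log (f y)) x = (f x)⁻¹ • gradient f x := by
  rw [gradient, (hf.hasFDerivAt.log hx).fderiv, map_smul, gradient]

lemma fderiv_fderiv_log_apply {E : Type*} [NormedAddCommGroup E] [NormedSpace ℝ E]
    {f : E → ℝ} (hf : ContDiff ℝ 2 f) (hf0 : ∀ y, f y ≠ 0) (x v : E) :
    fderiv ℝ (fun y => fderiv ℝ (fun z => Real.log (f z)) y v) x v
      = (f x)⁻¹ * fderiv ℝ (fun y => fderiv ℝ f y v) x v
        - ((f x)⁻¹) ^ 2 * (fderiv ℝ f x v) ^ 2 := by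
  have hdf : Differentiable ℝ f := hf.differentiable two_ne_zero
  have hdfv : DifferentiableAt ℝ (fun y => fderiv ℝ f y v) x :=
    ((hf.fderiv_right le_rfl).differentiable one_ne_zero).clm_apply (differentiable_const v) x
  have hlog : (fun y => fderiv ℝ (fun z => Real.log (f z)) y v)
      = fun y => (f y)⁻¹ * fderiv ℝ f y v := by
    funext y
    rw [((hdf y).hasFDerivAt.log (hf0 y)).fderiv]
    rfl
  have hinv : HasFDerivAt (fun y => (f y)⁻¹) ((-((f x) ^ 2)⁻¹ : ℝ) • fderiv ℝ f x) x :=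
    (hasDerivAt_inv (hf0 x)).comp_hasFDerivAt x (hdf x).hasFDerivAt
  rw [hlog, fderiv_fun_mul hinv.differentiableAt hdfv, hinv.fderiv]
  simp only [add_apply, smul_apply, smul_eq_mul]
  field_simp
  ring

lemma lap_add_const (f : EuclideanSpace ℝ (Fin n) → ℝ) (C : ℝ) (x : EuclideanSpace ℝ (Fin n)) :
    lap (fun y => f y + C) x = lap f x := by
  simp only [lap, fderiv_add_const]

lemma sum_sq_fderiv_single (f : EuclideanSpace ℝ (Fin n) → ℝ) (x : EuclideanSpace ℝ (Fin n)) :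
    ∑ i : Fin n, (fderiv ℝ f x (EuclideanSpace.single i 1)) ^ 2 = ‖gradient f x‖ ^ 2 := by
  rw [← real_inner_self_eq_norm_sq, PiLp.inner_apply]
  refine Finset.sum_congr rfl fun i _ => ?_
  rw [← inner_gradient_left, EuclideanSpace.inner_single_right]
  simp [sq]

lemma lap_log {f : EuclideanSpace ℝ (Fin n) → ℝ} (hf : ContDiff ℝ 2 f) (hf0 : ∀ y, f y ≠ 0)
    (x : EuclideanSpace ℝ (Fin n)) :
    lap (fun y => Real.log (f y)) x
      = (f x)⁻¹ * lap f x - ((f x)⁻¹) ^ 2 * ‖gradient f x‖ ^ 2 := by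
  simp only [lap, fderiv_fderiv_log_apply hf hf0, Finset.sum_sub_distrib, ← Finset.mul_sum,
    sum_sq_fderiv_single]

end SpatialDerivatives

lemma hasDerivAt_log_sub_integral_comp_sub {q β : ℝ → ℝ} {T t : ℝ}
    (hq : DifferentiableAt ℝ q (T - t)) (hq0 : q (T - t) ≠ 0) (hβ : Continuous β) (k C : ℝ) :
    HasDerivAt (fun r => Real.log (q (T - r)) - k * (∫ s in (0:ℝ)..(T - r), (β s) ^ 2) + C)
      (-deriv q (T - t) / q (T - t) + k * (β (T - t)) ^ 2) t := by
  have hrev : HasDerivAt (fun r : ℝ => T - r) (-1) t := by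
    simpa using (hasDerivAt_id t).const_sub T
  have hlog := (hq.hasDerivAt.comp t hrev).log hq0
  have hint := ((hβ.pow 2).integral_hasStrictDerivAt 0 (T - t)).hasDerivAt.comp t hrev
  refine ((hlog.sub (hint.const_mul k)).add_const C).congr_deriv ?_
  simp only [Function.comp_apply, Pi.pow_apply]
  ring

theorem stmt_2_general (n : ℕ) (T : ℝ) (c : ℝ) (hc : 0 < c)
    (β : ℝ → ℝ) (hβcont : Continuous β)
    (p : ℝ → EuclideanSpace ℝ (Fin n) → ℝ)
    (hp_space : ∀ t, ContDiff ℝ 2 (p t))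
    (hp_time : ∀ x, Differentiable ℝ (fun s => p s x))
    (hp_pos : ∀ t x, 0 < p t x)
    (hFP : ∀ t ∈ Icc 0 T, ∀ x, deriv (fun s => p s x) t
      = (1 / 2) * (β t) ^ 2 * (⟪x, gradient (p t) x⟫ + n * p t x + lap (p t) x))
    (u : ℝ → EuclideanSpace ℝ (Fin n) → ℝ)
    (hu : ∀ t x, u t x = Real.log (p (T - t) x)
        - ((n : ℝ) / 2) * (∫ s in (0:ℝ)..(T - t), (β s) ^ 2) + Real.log c) :
    (∀ t ∈ Icc 0 T, ∀ x,
      deriv (fun s => u s x) t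
        + (β (T - t)) ^ 2 * ⟪(1 / 2 : ℝ) • x + gradient (u t) x, gradient (u t) x⟫
        + (1 / 2) * (β (T - t)) ^ 2 * lap (u t) x
        - (1 / 2) * ‖β (T - t) • gradient (u t) x‖ ^ 2 = 0) ∧
    (∀ x, u T x = Real.log (c * p 0 x)) := by
  refine ⟨fun t ht x => ?_, fun x => ?_⟩
  · have hs : T - t ∈ Icc 0 T := ⟨by linarith [ht.2], by linarith [ht.1]⟩
    have hp0 : ∀ y, p (T - t) y ≠ 0 := fun y => (hp_pos (T - t) y).ne'
    have hu_time : deriv (fun s => u s x) t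
        = -deriv (fun s => p s x) (T - t) / p (T - t) x + (n / 2) * (β (T - t)) ^ 2 := by
      simp only [hu]
      exact (hasDerivAt_log_sub_integral_comp_sub (hp_time x _) (hp0 x) hβcont _ _).deriv
    have hu_space : u t = fun y => Real.log (p (T - t) y)
        + (Real.log c - (n / 2) * ∫ s in (0:ℝ)..(T - t), (β s) ^ 2) := by
      funext y; rw [hu]; ring
    have hdiff := (hp_space (T - t)).differentiable two_ne_zero x
    rw [hu_time, hFP _ hs, hu_space, gradient_add_const, lap_add_const,
      gradient_log hdiff (hp0 x), lap_log (hp_space (T - t)) hp0]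
    simp only [inner_add_left, real_inner_smul_left, real_inner_smul_right,
      real_inner_self_eq_norm_sq, norm_smul, Real.norm_eq_abs, mul_pow, sq_abs]
    field_simp [hp0 x]
    ring
  · rw [hu, sub_self, intervalIntegral.integral_same, Real.log_mul hc.ne' (hp_pos 0 x).ne']
    ring

/-- The logarithmic time-reversal transform `u(t,x) = log p(T-t,x) - (n/2)∫₀^{T-t}β(s)²ds + log c`
of a positive `C^{1,2}` solution of the Fokker–Planck equation
`∂ₜp = (1/2)β(t)²[x·∇p + n p + Δp]` solves the semi-linear PDE
`∂ₜu + β̄(t)²[(1/2)x + ∇u]·∇u + (1/2)β̄(t)²Δu - (1/2)‖β̄(t)∇u‖² = 0` with `β̄(t) = β(T-t)`,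
and satisfies the terminal condition `u(T,x) = log(c·p(0,x))`. -/
theorem stmt_2 (n : ℕ) (T : ℝ) (hT : 0 < T) (c : ℝ) (hc : 0 < c)
    (β : ℝ → ℝ) (hβcont : Continuous β) (hβpos : ∀ t, 0 < β t)
    (p : ℝ → EuclideanSpace ℝ (Fin n) → ℝ)
    (hp_space : ∀ t, ContDiff ℝ 2 (p t))
    (hp_time : ∀ x, Differentiable ℝ (fun s => p s x))
    (hp_pos : ∀ t x, 0 < p t x)
    (hFP : ∀ t ∈ Icc 0 T, ∀ x, deriv (fun s => p s x) t
      = (1 / 2) * (β t) ^ 2 * (⟪x, gradient (p t) x⟫ + n * p t x + lap (p t) x))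
    (u : ℝ → EuclideanSpace ℝ (Fin n) → ℝ)
    (hu : ∀ t x, u t x = Real.log (p (T - t) x)
        - ((n : ℝ) / 2) * (∫ s in (0:ℝ)..(T - t), (β s) ^ 2) + Real.log c) :
    (∀ t ∈ Icc 0 T, ∀ x,
      deriv (fun s => u s x) t
        + (β (T - t)) ^ 2 * ⟪(1 / 2 : ℝ) • x + gradient (u t) x, gradient (u t) x⟫
        + (1 / 2) * (β (T - t)) ^ 2 * lap (u t) x
        - (1 / 2) * ‖β (T - t) • gradient (u t) x‖ ^ 2 = 0) ∧
    (∀ x, u T x = Real.log (c * p 0 x)) :=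
  stmt_2_general n T c hc β hβcont p hp_space hp_time hp_pos hFP u hu
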